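/- Let e ∈ (0,1]. Then −log e = max_{w > 0} (log w − w e + 1), and the maximum is attained at w = 1/e. Consequently, for the rate r = log(1 + SINR) with MMSE error e = 1/(1 + SINR), one has r = max_{w>0} (log w − w e + 1). -/

import Mathlib

/-! The bound is `log x ≤ x - 1` at `x = w e`, with equality at `x = 1`, i.e. at `w = 1/e`.
For the rate, `e = 1/(1 + SINR)` gives `-log e = log (1 + SINR)`. -/

open Real

lemma log_sub_mul_add_one_le_neg_log {w e : ℝ} (hw : 0 < w) (he : 0 < e) :
    log w - w * e + 1 ≤ -log e := by
  have h := log_le_sub_one_of_pos (mul_pos hw he)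
  rw [log_mul hw.ne' he.ne'] at h
  linarith

lemma log_one_div_sub_one_div_mul_add_one {e : ℝ} (he : e ≠ 0) :
    log (1 / e) - 1 / e * e + 1 = -log e := by
  rw [one_div, log_inv, inv_mul_cancel₀ he]
  ring

theorem isGreatest_log_sub_mul_add_one {e : ℝ} (he : 0 < e) :
    IsGreatest {v : ℝ | ∃ w : ℝ, 0 < w ∧ v = log w - w * e + 1} (-log e) :=
  ⟨⟨1 / e, by positivity, (log_one_div_sub_one_div_mul_add_one he.ne').symm⟩,
    fun _ ⟨_, hw, hv⟩ => hv ▸ log_sub_mul_add_one_le_neg_log hw he⟩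

theorem stmt_9_general (e : ℝ) (he : 0 < e) :
    IsGreatest {v : ℝ | ∃ w : ℝ, 0 < w ∧ v = Real.log w - w * e + 1} (-Real.log e) ∧
      Real.log (1 / e) - (1 / e) * e + 1 = -Real.log e ∧
      ∀ s : ℝ, 0 ≤ s → e = 1 / (1 + s) →
        IsGreatest {v : ℝ | ∃ w : ℝ, 0 < w ∧ v = Real.log w - w * e + 1}
          (Real.log (1 + s)) := by
  refine ⟨isGreatest_log_sub_mul_add_one he, log_one_div_sub_one_div_mul_add_one he.ne',
    fun s _ hse => ?_⟩
  convert isGreatest_log_sub_mul_add_one he using 1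
  rw [hse, one_div, log_inv, neg_neg]

/-- Rate–WMMSE equivalence: for `e ∈ (0,1]`, `−log e = max_{w>0} (log w − w e + 1)`,
attained at `w = 1/e`; hence for rate `r = log(1 + SINR)` and MMSE error
`e = 1/(1 + SINR)`, `r = max_{w>0} (log w − w e + 1)`. -/
theorem stmt_9 (e : ℝ) (he : 0 < e) (he1 : e ≤ 1) :
    IsGreatest {v : ℝ | ∃ w : ℝ, 0 < w ∧ v = Real.log w - w * e + 1} (-Real.log e) ∧
      Real.log (1 / e) - (1 / e) * e + 1 = -Real.log e ∧
      ∀ s : ℝ, 0 ≤ s → e = 1 / (1 + s) →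
        IsGreatest {v : ℝ | ∃ w : ℝ, 0 < w ∧ v = Real.log w - w * e + 1}
          (Real.log (1 + s)) :=
  stmt_9_general e he
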